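/- A sequence of finite subsets F_T of an abelian discrete group Λ indexed by T ≥ T_0, satisfying that |(⋃_{T' < T} F_{T'}^{-1}) · F_T| ≤ C |F_T| for all T (temperedness), satisfies the maximal inequality: for any measure preserving action of Λ on a probability space (X, μ) and any f ∈ L¹(μ), the maximal function M[f](x) = sup_{T ≥ T_0} |F_T|^{-1} Σ_{h ∈ F_T} |f(h·x)| satisfies μ{x : M[f](x) > λ} ≤ C₁ λ^{-1} ‖f‖₁ for some constant C₁ depending only on C. -/

import Mathlib

open Filter MeasureTheory
open scoped Pointwise

section Aux

variable {Λ : Type*} [CommGroup Λ] [DecidableEq Λ]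

private lemma aux_arith (s : ℕ) : ∃ M : ℕ, (M + 1) ^ s < 2 ^ M := by
  cases s with
  | zero => exact ⟨1, by norm_num⟩
  | succ t =>
    refine ⟨(t + 1) * (2 * (t + 2)), ?_⟩
    have h1 : t + 1 ≤ 2 ^ t := Nat.succ_le_of_lt (Nat.lt_two_pow_self (n := t))
    have h2 : t + 2 ≤ 2 ^ (t + 1) := by
      have : 2 ^ t + 2 ^ t = 2 ^ (t + 1) := by ring
      omega
    have hbase : (t + 1) * (2 * (t + 2)) + 1 < 2 ^ (2 * (t + 2)) := by
      have hm : (t + 1) * (t + 2) ≤ 2 ^ t * 2 ^ (t + 1) := Nat.mul_le_mul h1 h2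
      have he : 2 ^ t * 2 ^ (t + 1) = 2 ^ (2 * t + 1) := by ring
      have h3 : 2 * (2 ^ (2 * t + 1)) + 1 < 2 ^ (2 * t + 4) := by
        have : 2 * 2 ^ (2 * t + 1) + 2 ^ (2*t+1) * 6 ≤ 2 ^ (2 * t + 4) := by
          have : (2:ℕ) ^ (2*t+4) = 2 ^ (2*t+1) * 8 := by ring
          omega
        have hp : 0 < 2 ^ (2*t+1) := Nat.pow_pos (by norm_num)
        omega
      have : 2 * (t + 2) = 2 * t + 4 := by ring
      rw [this]
      calc (t + 1) * (2 * (t + 2)) + 1 = 2 * ((t+1)*(t+2)) + 1 := by ring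
        _ ≤ 2 * (2 ^ t * 2 ^ (t+1)) + 1 := by omega
        _ = 2 * 2 ^ (2*t+1) + 1 := by rw [he]
        _ < 2 ^ (2*t+4) := h3
    calc ((t + 1) * (2 * (t + 2)) + 1) ^ (t + 1)
        < (2 ^ (2 * (t + 2))) ^ (t + 1) := Nat.pow_lt_pow_left hbase (by omega)
      _ = 2 ^ ((t + 1) * (2 * (t + 2))) := by rw [← pow_mul, Nat.mul_comm]

private lemma aux_exponents (S : Finset Λ) (M : ℕ) :
    ∀ x ∈ S ^ M, ∃ v : Λ → ℕ, (∀ s, v s ≤ M) ∧ x = ∏ s ∈ S, s ^ v s := by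
  induction M with
  | zero =>
    intro x hx
    rw [pow_zero, Finset.mem_one] at hx
    exact ⟨fun _ => 0, fun _ => le_rfl, by simp [hx]⟩
  | succ M ih =>
    intro x hx
    rw [pow_succ] at hx
    obtain ⟨y, hy, s, hs, rfl⟩ := Finset.mem_mul.1 hx
    obtain ⟨v, hv, rfl⟩ := ih y hy
    refine ⟨fun u => v u + if u = s then 1 else 0, fun u => ?_, ?_⟩
    · have := hv u
      show v u + (if u = s then 1 else 0) ≤ M + 1
      split <;> omega
    · rw [show (∏ u ∈ S, u ^ (v u + if u = s then 1 else 0)) =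
        (∏ u ∈ S, u ^ v u) * ∏ u ∈ S, (if u = s then u else 1) by
          rw [← Finset.prod_mul_distrib]
          refine Finset.prod_congr rfl fun u _ => ?_
          rw [pow_add]
          split <;> simp]
      rw [Finset.prod_ite_eq' S s (fun u => u), if_pos hs]

private lemma aux_growth (S : Finset Λ) (M : ℕ) : (S ^ M).card ≤ (M + 1) ^ S.card := by
  classical
  have hsub : S ^ M ⊆ Finset.image
      (fun v : {x // x ∈ S} → Fin (M + 1) => ∏ t ∈ S.attach, (t : Λ) ^ ((v t : ℕ)))
      Finset.univ := by
    intro x hx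
    obtain ⟨v, hv, rfl⟩ := aux_exponents S M x hx
    refine Finset.mem_image.2 ⟨fun t => ⟨v t, Nat.lt_succ_of_le (hv t)⟩, Finset.mem_univ _, ?_⟩
    rw [← Finset.prod_attach S (fun s => s ^ v s)]
  calc (S ^ M).card ≤ _ := Finset.card_le_card hsub
    _ ≤ (Finset.univ : Finset ({x // x ∈ S} → Fin (M+1))).card := Finset.card_image_le
    _ = (M + 1) ^ S.card := by
        rw [Finset.card_univ, Fintype.card_fun, Fintype.card_fin, Fintype.card_coe]

private lemma aux_one_mem_pow (S : Finset Λ) (h1 : (1:Λ) ∈ S) (k : ℕ) : (1:Λ) ∈ S ^ k := by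
  induction k with
  | zero => simp [pow_zero]
  | succ k ih => rw [pow_succ]; simpa using Finset.mul_mem_mul ih h1

private lemma aux_folner (S : Finset Λ) (h1 : (1:Λ) ∈ S) :
    ∃ k : ℕ, ((S ^ (k + 1)).card : ℝ) ≤ 2 * ((S ^ k).card : ℝ) ∧ (S ^ k).Nonempty := by
  obtain ⟨M, hM⟩ := aux_arith S.card
  by_contra hcon
  push_neg at hcon
  have hgrow : ∀ k : ℕ, (2 : ℝ) ^ k ≤ ((S ^ k).card : ℝ) := by
    intro k
    induction k with
    | zero => simp [pow_zero, Finset.card_one]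
    | succ k ih =>
      have hlt : ¬ (((S ^ (k + 1)).card : ℝ) ≤ 2 * ((S ^ k).card : ℝ)) :=
        fun h => (Finset.nonempty_iff_ne_empty.1 ⟨1, aux_one_mem_pow S h1 k⟩) (hcon k h)
      push_neg at hlt
      calc (2:ℝ) ^ (k+1) = 2 * 2 ^ k := by ring
        _ ≤ 2 * ((S ^ k).card : ℝ) := by linarith
        _ ≤ ((S ^ (k+1)).card : ℝ) := le_of_lt hlt
  have h3 := hgrow M
  have h4 : ((S ^ M).card : ℝ) ≤ ((M + 1 : ℕ) : ℝ) ^ S.card := by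
    exact_mod_cast Nat.cast_le.mpr (aux_growth S M)
  have h5 : (((M : ℕ) + 1 : ℕ) : ℝ) ^ S.card < (2:ℝ) ^ M := by exact_mod_cast hM
  push_cast at h4 h5
  linarith

end Aux
section Greedy

variable {Λ : Type*} [CommGroup Λ] [DecidableEq Λ]

private lemma aux_greedy (lam : ℝ) (φ : Λ → ℝ) (hφ : ∀ g, 0 ≤ φ g) (Fn : Finset Λ)
    (R : Finset Λ) :
    (∀ a ∈ R, lam * Fn.card < ∑ h ∈ Fn, φ (h * a)) →
    ∃ K ⊆ R,
      (lam / 2 * Fn.card * K.card ≤ ∑ g ∈ K.biUnion fun b => Fn.image (· * b), φ g) ∧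
      ∀ a ∈ R, a ∈ K ∨
        lam / 2 * Fn.card <
          ∑ g ∈ (Fn.image (· * a)) ∩ (K.biUnion fun b => Fn.image (· * b)), φ g := by
  classical
  induction R using Finset.induction_on with
  | empty =>
    intro _
    exact ⟨∅, Finset.Subset.refl _, by simp, by simp⟩
  | @insert a₀ R' ha₀ ih =>
    intro hwin
    obtain ⟨K', hK'sub, hK'low, hK'tri⟩ := ih (fun a ha => hwin a (Finset.mem_insert_of_mem ha))
    set U' := K'.biUnion fun b => Fn.image (· * b) with hU'
    by_cases hc : lam / 2 * Fn.card < ∑ g ∈ (Fn.image (· * a₀)) ∩ U', φ g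
    · refine ⟨K', hK'sub.trans (Finset.subset_insert _ _), hK'low, ?_⟩
      intro a ha
      rcases Finset.mem_insert.1 ha with rfl | ha'
      · exact Or.inr hc
      · exact hK'tri a ha'
    · refine ⟨insert a₀ K', Finset.insert_subset_insert _ hK'sub, ?_, ?_⟩
      · have ha₀K' : a₀ ∉ K' := fun h => ha₀ (hK'sub h)
        rw [Finset.biUnion_insert, Finset.card_insert_of_notMem ha₀K']
        have hsplit : ∑ g ∈ (Fn.image (· * a₀)) ∪ U', φ g
            = (∑ g ∈ U', φ g) + ∑ g ∈ (Fn.image (· * a₀)) \ U', φ g := by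
          rw [← Finset.sum_union (Finset.sdiff_disjoint).symm]
          congr 1
          rw [Finset.union_comm]
          exact (Finset.union_sdiff_self_eq_union).symm
        have hsum : ∑ g ∈ (Fn.image (· * a₀)) ∩ U', φ g
              + ∑ g ∈ (Fn.image (· * a₀)) \ U', φ g = ∑ g ∈ Fn.image (· * a₀), φ g :=
          Finset.sum_inter_add_sum_sdiff _ _ _
        have himg : ∑ g ∈ Fn.image (· * a₀), φ g = ∑ h ∈ Fn, φ (h * a₀) :=
          Finset.sum_image (fun x _ y _ h => mul_right_cancel h)
        have h1 : lam * Fn.card < ∑ g ∈ Fn.image (· * a₀), φ g := by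
          rw [himg]; exact hwin a₀ (Finset.mem_insert_self _ _)
        push_neg at hc
        have h2 : lam / 2 * Fn.card ≤ ∑ g ∈ (Fn.image (· * a₀)) \ U', φ g := by linarith
        rw [hsplit]
        push_cast
        nlinarith [hK'low]
      · intro a ha
        rcases Finset.mem_insert.1 ha with rfl | ha'
        · exact Or.inl (Finset.mem_insert_self _ _)
        · rcases hK'tri a ha' with h | h
          · exact Or.inl (Finset.mem_insert_of_mem h)
          · refine Or.inr (lt_of_lt_of_le h ?_)
            apply Finset.sum_le_sum_of_subset_of_nonneg
            · apply Finset.inter_subset_inter_left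
              rw [Finset.biUnion_insert]
              exact Finset.subset_union_right
            · exact fun g _ _ => hφ g

end Greedy
section Sel

variable {Λ : Type*} [CommGroup Λ] [DecidableEq Λ]

private lemma aux_sel (lam : ℝ) (φ : Λ → ℝ) (hφ : ∀ g, 0 ≤ φ g) (F : ℕ → Finset Λ) :
    ∀ (N : ℕ) (A : Finset Λ) (lev : Λ → ℕ),
    (∀ a ∈ A, lev a < N) →
    (∀ a ∈ A, lam * (F (lev a)).card < ∑ h ∈ F (lev a), φ (h * a)) →
    ∃ KK : ℕ → Finset Λ,
      (∀ n, KK n ⊆ A.filter (fun a => lev a = n)) ∧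
      (∀ m n, m ≠ n → Disjoint ((KK m).biUnion fun b => (F m).image (· * b))
                               ((KK n).biUnion fun b => (F n).image (· * b))) ∧
      (∀ n, lam / 2 * (F n).card * (KK n).card
          ≤ ∑ g ∈ (KK n).biUnion fun b => (F n).image (· * b), φ g) ∧
      (∀ a ∈ A, a ∈ KK (lev a) ∨
        (lam / 2 * (F (lev a)).card <
          ∑ g ∈ ((F (lev a)).image (· * a))
              ∩ ((KK (lev a)).biUnion fun b => (F (lev a)).image (· * b)), φ g) ∨
        ∃ m, lev a < m ∧ ∃ b ∈ KK m,
          ¬ Disjoint ((F (lev a)).image (· * a)) ((F m).image (· * b))) := by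
  classical
  intro N
  induction N with
  | zero =>
    intro A lev hlev _
    exact ⟨fun _ => ∅, fun n => by simp, fun m n _ => by simp, fun n => by simp,
      fun a ha => absurd (hlev a ha) (Nat.not_lt_zero _)⟩
  | succ N ih =>
    intro A lev hlev hwin
    set Atop := A.filter (fun a => lev a = N) with hAtop
    have hwinTop : ∀ a ∈ Atop, lam * (F N).card < ∑ h ∈ F N, φ (h * a) := by
      intro a ha
      obtain ⟨haA, hlevA⟩ := Finset.mem_filter.1 ha
      have := hwin a haA
      rwa [hlevA] at this
    obtain ⟨KN, hKNsub, hKNlow, hKNtri⟩ := aux_greedy lam φ hφ (F N) Atop hwinTop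
    set UN := KN.biUnion (fun b => (F N).image (· * b)) with hUN
    set A' := (A.filter fun a => lev a ≠ N).filter
        (fun a => Disjoint ((F (lev a)).image (· * a)) UN) with hA'
    have hA'A : ∀ a ∈ A', a ∈ A ∧ lev a ≠ N ∧
        Disjoint ((F (lev a)).image (· * a)) UN := by
      intro a ha
      obtain ⟨h1, h2⟩ := Finset.mem_filter.1 ha
      obtain ⟨h3, h4⟩ := Finset.mem_filter.1 h1
      exact ⟨h3, h4, h2⟩
    have hlev' : ∀ a ∈ A', lev a < N := by
      intro a ha
      obtain ⟨h1, h2, _⟩ := hA'A a ha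
      have := hlev a h1
      omega
    obtain ⟨KK', hsub', hdisj', hlow', htri'⟩ :=
      ih A' lev hlev' (fun a ha => hwin a (hA'A a ha).1)
    classical
    set KKf : ℕ → Finset Λ := fun n => if n = N then KN else KK' n with hKKf
    have hKKfN : KKf N = KN := by simp [hKKf]
    have hKKfne : ∀ n, n ≠ N → KKf n = KK' n := by
      intro n hn; simp [hKKf, hn]
    refine ⟨KKf, ?_, ?_, ?_, ?_⟩
    · intro n
      by_cases hn : n = N
      · subst hn; rw [hKKfN]; exact hKNsub
      · rw [hKKfne n hn]
        refine (hsub' n).trans ?_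
        intro a ha
        obtain ⟨h1, h2⟩ := Finset.mem_filter.1 ha
        exact Finset.mem_filter.2 ⟨(hA'A a h1).1, h2⟩
    · have hdUN : ∀ n, n ≠ N →
          Disjoint ((KK' n).biUnion fun b => (F n).image (· * b)) UN := by
        intro n _
        rw [Finset.disjoint_biUnion_left]
        intro b hb
        have hb' := hsub' n hb
        obtain ⟨hbA', hbn⟩ := Finset.mem_filter.1 hb'
        have := (hA'A b hbA').2.2
        rwa [hbn] at this
      intro m n hmn
      by_cases hm : m = N
      · subst hm
        rw [hKKfN, hKKfne n (Ne.symm hmn)]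
        exact (hdUN n (Ne.symm hmn)).symm
      · by_cases hn : n = N
        · subst hn
          rw [hKKfN, hKKfne m hm]
          exact hdUN m hm
        · rw [hKKfne m hm, hKKfne n hn]
          exact hdisj' m n hmn
    · intro n
      by_cases hn : n = N
      · subst hn; rw [hKKfN]; exact hKNlow
      · rw [hKKfne n hn]; exact hlow' n
    · intro a ha
      by_cases hN : lev a = N
      · have haTop : a ∈ Atop := Finset.mem_filter.2 ⟨ha, hN⟩
        rcases hKNtri a haTop with h | h
        · left; rw [hN, hKKfN]; exact h
        · right; left; rw [hN, hKKfN]; exact h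
      · by_cases hA'mem : a ∈ A'
        · rcases htri' a hA'mem with h | h | ⟨m, hm, b, hb, hnd⟩
          · left; rw [hKKfne _ hN]; exact h
          · right; left; rw [hKKfne _ hN]; exact h
          · have hmN : m ≠ N := by
              intro hmeq
              subst hmeq
              have := hsub' m hb
              obtain ⟨h1, h2⟩ := Finset.mem_filter.1 this
              exact (hA'A b h1).2.1 h2
            exact Or.inr (Or.inr ⟨m, hm, b, by rw [hKKfne m hmN]; exact hb, hnd⟩)
        · have haf : a ∈ A.filter fun a => lev a ≠ N := Finset.mem_filter.2 ⟨ha, hN⟩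
          have hnd : ¬ Disjoint ((F (lev a)).image (· * a)) UN := by
            intro hd
            exact hA'mem (Finset.mem_filter.2 ⟨haf, hd⟩)
          rw [hUN, Finset.disjoint_biUnion_right] at hnd
          push_neg at hnd
          obtain ⟨b, hb, hbnd⟩ := hnd
          have hltN : lev a < N := by
            have := hlev a ha; omega
          exact Or.inr (Or.inr ⟨N, hltN, b, by rw [hKKfN]; exact hb, hbnd⟩)

end Sel
section Cov

variable {Λ : Type*} [CommGroup Λ] [DecidableEq Λ]

private lemma aux_cov (C lam : ℝ) (hC : 0 ≤ C) (hlam : 0 < lam)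
    (F : ℕ → Finset Λ) (hne : ∀ n, (F n).Nonempty)
    (htemp : ∀ n : ℕ,
      ((((Finset.range n).biUnion fun m => (F m).image fun g => g⁻¹) * F n).card : ℝ)
        ≤ C * ((F n).card : ℝ))
    (φ : Λ → ℝ) (hφ : ∀ g, 0 ≤ φ g) (N : ℕ) (A : Finset Λ) (lev : Λ → ℕ)
    (hlev : ∀ a ∈ A, lev a < N)
    (hwin : ∀ a ∈ A, lam * (F (lev a)).card < ∑ h ∈ F (lev a), φ (h * a)) :
    lam * A.card ≤ (2*C+4) * ∑ g ∈ A.biUnion (fun a => (F (lev a)).image (· * a)), φ g := by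
  classical
  obtain ⟨KK, hsub, hdisj, hlow, htri⟩ := aux_sel lam φ hφ F N A lev hlev hwin
  set U : ℕ → Finset Λ := fun n => (KK n).biUnion fun b => (F n).image (· * b) with hU
  have hUnn : ∀ n, (0:ℝ) ≤ ∑ g ∈ U n, φ g := fun n => Finset.sum_nonneg fun g _ => hφ g
  have hcpos : ∀ n, (0:ℝ) < ((F n).card : ℝ) := fun n => by exact_mod_cast (hne n).card_pos
  have hcard1 : ∀ n, (1:ℝ) ≤ ((F n).card : ℝ) := fun n => by
    exact_mod_cast (hne n).card_pos
  -- bound on kept cards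
  have hKbound : ∀ n, ((KK n).card : ℝ) * ((F n).card : ℝ) ≤ 2/lam * ∑ g ∈ U n, φ g := by
    intro n
    have h2 : (0:ℝ) ≤ 2/lam := by positivity
    have h3 := mul_le_mul_of_nonneg_left (hlow n) h2
    calc ((KK n).card : ℝ) * ((F n).card : ℝ)
        = 2/lam * (lam / 2 * ((F n).card : ℝ) * ((KK n).card : ℝ)) := by
          field_simp
      _ ≤ 2/lam * ∑ g ∈ U n, φ g := h3
  have hKbound' : ∀ n, ((KK n).card : ℝ) ≤ 2/lam * ∑ g ∈ U n, φ g := by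
    intro n
    refine le_trans ?_ (hKbound n)
    have h0 : (0:ℝ) ≤ ((KK n).card : ℝ) := by positivity
    nlinarith [hcard1 n]
  -- the three classes
  set Kf := A.filter (fun a => a ∈ KK (lev a)) with hKf
  set D := A.filter (fun a => lam / 2 * ((F (lev a)).card : ℝ) <
      ∑ g ∈ ((F (lev a)).image (· * a)) ∩ U (lev a), φ g) with hD
  set Bl := A.filter (fun a => ∃ m, lev a < m ∧ ∃ b ∈ KK m,
      ¬ Disjoint ((F (lev a)).image (· * a)) ((F m).image (· * b))) with hBl
  have hAsub : A ⊆ (Kf ∪ D) ∪ Bl := by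
    intro a ha
    rcases htri a ha with h | h | h
    · exact Finset.mem_union_left _ (Finset.mem_union_left _ (Finset.mem_filter.2 ⟨ha, h⟩))
    · exact Finset.mem_union_left _ (Finset.mem_union_right _ (Finset.mem_filter.2 ⟨ha, h⟩))
    · exact Finset.mem_union_right _ (Finset.mem_filter.2 ⟨ha, h⟩)
  have hcards : (A.card : ℝ) ≤ (Kf.card : ℝ) + (D.card : ℝ) + (Bl.card : ℝ) := by
    have h1 : A.card ≤ ((Kf ∪ D) ∪ Bl).card := Finset.card_le_card hAsub
    have h2 : ((Kf ∪ D) ∪ Bl).card ≤ (Kf ∪ D).card + Bl.card := Finset.card_union_le _ _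
    have h3 : (Kf ∪ D).card ≤ Kf.card + D.card := Finset.card_union_le _ _
    have h4 : A.card ≤ Kf.card + D.card + Bl.card := by omega
    exact_mod_cast h4
  -- Kf bound
  have hKfB : (Kf.card : ℝ) ≤ ∑ n ∈ Finset.range N, 2/lam * ∑ g ∈ U n, φ g := by
    have hKfsub : Kf ⊆ (Finset.range N).biUnion KK := by
      intro a ha
      obtain ⟨haA, hk⟩ := Finset.mem_filter.1 ha
      exact Finset.mem_biUnion.2 ⟨lev a, Finset.mem_range.2 (hlev a haA), hk⟩
    have h1 : Kf.card ≤ ∑ n ∈ Finset.range N, (KK n).card :=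
      (Finset.card_le_card hKfsub).trans (Finset.card_biUnion_le)
    calc (Kf.card : ℝ) ≤ ∑ n ∈ Finset.range N, ((KK n).card : ℝ) := by exact_mod_cast h1
      _ ≤ _ := Finset.sum_le_sum fun n _ => hKbound' n
  -- D bound
  have hDnB : ∀ n, ((D.filter fun a => lev a = n).card : ℝ) ≤ 2/lam * ∑ g ∈ U n, φ g := by
    intro n
    set Dn := D.filter (fun a => lev a = n) with hDn
    set s := ∑ g ∈ U n, φ g with hs
    have hwel : ∀ a ∈ Dn, lam/2 * ((F n).card : ℝ)
        ≤ ∑ g ∈ ((F n).image (· * a)) ∩ U n, φ g := by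
      intro a ha
      obtain ⟨haD, hlevn⟩ := Finset.mem_filter.1 ha
      obtain ⟨_, hstrict⟩ := Finset.mem_filter.1 haD
      rw [hlevn] at hstrict
      exact le_of_lt hstrict
    have hsum1 : (Dn.card : ℝ) * (lam/2 * ((F n).card : ℝ))
        ≤ ∑ a ∈ Dn, ∑ g ∈ ((F n).image (· * a)) ∩ U n, φ g := by
      have := Finset.card_nsmul_le_sum Dn
        (fun a => ∑ g ∈ ((F n).image (· * a)) ∩ U n, φ g) _ hwel
      rwa [nsmul_eq_mul] at this
    have hswap : ∑ a ∈ Dn, ∑ g ∈ ((F n).image (· * a)) ∩ U n, φ g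
        ≤ ((F n).card : ℝ) * s := by
      have hrepr : ∀ a : Λ, ∑ g ∈ ((F n).image (· * a)) ∩ U n, φ g
          = ∑ g ∈ U n, if g ∈ (F n).image (· * a) then φ g else 0 := by
        intro a
        rw [Finset.inter_comm, ← Finset.filter_mem_eq_inter, Finset.sum_filter]
      calc ∑ a ∈ Dn, ∑ g ∈ ((F n).image (· * a)) ∩ U n, φ g
          = ∑ a ∈ Dn, ∑ g ∈ U n, if g ∈ (F n).image (· * a) then φ g else 0 := by
            exact Finset.sum_congr rfl fun a _ => hrepr a
        _ = ∑ g ∈ U n, ∑ a ∈ Dn, if g ∈ (F n).image (· * a) then φ g else 0 :=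
            Finset.sum_comm
        _ ≤ ∑ g ∈ U n, ((F n).card : ℝ) * φ g := by
            refine Finset.sum_le_sum fun g hg => ?_
            rw [← Finset.sum_filter]
            rw [Finset.sum_const, nsmul_eq_mul]
            have hcnt : (Dn.filter fun a => g ∈ (F n).image (· * a)).card ≤ (F n).card := by
              refine Finset.card_le_card_of_injOn (fun a => g * a⁻¹) ?_ ?_
              · intro a ha
                obtain ⟨_, hmem⟩ := Finset.mem_filter.1 ha
                obtain ⟨h, hh, hEq⟩ := Finset.mem_image.1 hmem
                have hga : g * a⁻¹ = h := by rw [← hEq]; group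
                show g * a⁻¹ ∈ F n
                rw [hga]; exact hh
              · intro a _ b _ hEq
                have : a⁻¹ = b⁻¹ := mul_left_cancel hEq
                exact inv_injective this
            have := hφ g
            have hcast : ((Dn.filter fun a => g ∈ (F n).image (· * a)).card : ℝ)
                ≤ ((F n).card : ℝ) := by exact_mod_cast hcnt
            nlinarith
        _ = ((F n).card : ℝ) * s := by rw [← Finset.mul_sum]
    have hcombined := hsum1.trans hswap
    have hkey : ((F n).card : ℝ) * (2 * s - (Dn.card : ℝ) * lam) ≥ 0 := by nlinarith
    rw [div_mul_eq_mul_div, le_div_iff₀ hlam]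
    nlinarith [hcpos n]
  have hDB : (D.card : ℝ) ≤ ∑ n ∈ Finset.range N, 2/lam * ∑ g ∈ U n, φ g := by
    have hDsub : D ⊆ (Finset.range N).biUnion (fun n => D.filter fun a => lev a = n) := by
      intro a ha
      have haA : a ∈ A := Finset.mem_of_mem_filter a ha
      exact Finset.mem_biUnion.2 ⟨lev a, Finset.mem_range.2 (hlev a haA),
        Finset.mem_filter.2 ⟨ha, rfl⟩⟩
    have h1 : D.card ≤ ∑ n ∈ Finset.range N, (D.filter fun a => lev a = n).card :=
      (Finset.card_le_card hDsub).trans Finset.card_biUnion_le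
    calc (D.card : ℝ) ≤ ∑ n ∈ Finset.range N, ((D.filter fun a => lev a = n).card : ℝ) := by
          exact_mod_cast h1
      _ ≤ _ := Finset.sum_le_sum fun n _ => hDnB n
  -- Bl bound
  have hBlB : (Bl.card : ℝ) ≤ ∑ n ∈ Finset.range N, C * (2/lam * ∑ g ∈ U n, φ g) := by
    set E : ℕ → Finset Λ := fun m =>
      ((Finset.range m).biUnion fun m' => (F m').image fun g => g⁻¹) * F m with hE
    have hBlsub : Bl ⊆ (Finset.range N).biUnion
        (fun m => (KK m).biUnion fun b => (E m).image (· * b)) := by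
      intro a ha
      obtain ⟨haA, m, hm, b, hb, hnd⟩ := Finset.mem_filter.1 ha
      have hbA : b ∈ A ∧ lev b = m := by
        have := hsub m hb
        exact ⟨Finset.mem_of_mem_filter b this, (Finset.mem_filter.1 this).2⟩
      have hmN : m < N := by
        have := hlev b hbA.1
        rw [hbA.2] at this
        exact this
      refine Finset.mem_biUnion.2 ⟨m, Finset.mem_range.2 hmN,
        Finset.mem_biUnion.2 ⟨b, hb, ?_⟩⟩
      obtain ⟨g, hg1, hg2⟩ := Finset.not_disjoint_iff.1 hnd
      obtain ⟨h, hh, hEq1⟩ := Finset.mem_image.1 hg1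
      obtain ⟨h', hh', hEq2⟩ := Finset.mem_image.1 hg2
      refine Finset.mem_image.2 ⟨h⁻¹ * h', ?_, ?_⟩
      · exact Finset.mul_mem_mul
          (Finset.mem_biUnion.2 ⟨lev a, Finset.mem_range.2 hm,
            Finset.mem_image.2 ⟨h, hh, rfl⟩⟩) hh'
      · have : h' * b = h * a := by rw [hEq1, hEq2]
        rw [mul_assoc, this, inv_mul_cancel_left]
    have h1 : Bl.card ≤ ∑ m ∈ Finset.range N, ∑ b ∈ KK m, ((E m).image (· * b)).card := by
      refine (Finset.card_le_card hBlsub).trans (Finset.card_biUnion_le.trans ?_)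
      exact Finset.sum_le_sum fun m _ => Finset.card_biUnion_le
    calc (Bl.card : ℝ)
        ≤ ∑ m ∈ Finset.range N, ∑ b ∈ KK m, (((E m).image (· * b)).card : ℝ) := by
          exact_mod_cast h1
      _ ≤ ∑ m ∈ Finset.range N, ∑ b ∈ KK m, C * ((F m).card : ℝ) := by
          refine Finset.sum_le_sum fun m _ => Finset.sum_le_sum fun b _ => ?_
          refine le_trans ?_ (htemp m)
          exact_mod_cast Finset.card_image_le
      _ = ∑ m ∈ Finset.range N, C * (((KK m).card : ℝ) * ((F m).card : ℝ)) := by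
          refine Finset.sum_congr rfl fun m _ => ?_
          rw [Finset.sum_const, nsmul_eq_mul]
          ring
      _ ≤ ∑ m ∈ Finset.range N, C * (2/lam * ∑ g ∈ U m, φ g) := by
          refine Finset.sum_le_sum fun m _ => ?_
          exact mul_le_mul_of_nonneg_left (hKbound m) hC
  -- assemble
  have htotal : lam * (A.card : ℝ)
      ≤ ∑ n ∈ Finset.range N, (2*C+4) * ∑ g ∈ U n, φ g := by
    have hsumineq : (A.card : ℝ) ≤ ∑ n ∈ Finset.range N,
        (2/lam * ∑ g ∈ U n, φ g + 2/lam * ∑ g ∈ U n, φ g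
          + C * (2/lam * ∑ g ∈ U n, φ g)) := by
      rw [Finset.sum_add_distrib, Finset.sum_add_distrib]
      linarith [hKfB, hDB, hBlB, hcards]
    have := mul_le_mul_of_nonneg_left hsumineq hlam.le
    refine this.trans ?_
    rw [Finset.mul_sum]
    refine le_of_eq (Finset.sum_congr rfl fun n _ => ?_)
    field_simp
    ring
  refine htotal.trans ?_
  have hdisjU : (↑(Finset.range N) : Set ℕ).PairwiseDisjoint U :=
    fun m _ n _ hmn => hdisj m n hmn
  have hsumU : ∑ n ∈ Finset.range N, ∑ g ∈ U n, φ g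
      = ∑ g ∈ (Finset.range N).biUnion U, φ g := (Finset.sum_biUnion hdisjU).symm
  have hUsub : (Finset.range N).biUnion U ⊆ A.biUnion (fun a => (F (lev a)).image (· * a)) := by
    intro g hg
    obtain ⟨n, _, hgU⟩ := Finset.mem_biUnion.1 hg
    obtain ⟨b, hb, hgw⟩ := Finset.mem_biUnion.1 hgU
    have hbA := hsub n hb
    have hbA' : b ∈ A := Finset.mem_of_mem_filter b hbA
    have hlevb : lev b = n := (Finset.mem_filter.1 hbA).2
    refine Finset.mem_biUnion.2 ⟨b, hbA', ?_⟩
    rwa [hlevb]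
  calc ∑ n ∈ Finset.range N, (2*C+4) * ∑ g ∈ U n, φ g
      = (2*C+4) * ∑ n ∈ Finset.range N, ∑ g ∈ U n, φ g := by rw [Finset.mul_sum]
    _ = (2*C+4) * ∑ g ∈ (Finset.range N).biUnion U, φ g := by rw [hsumU]
    _ ≤ (2*C+4) * ∑ g ∈ A.biUnion (fun a => (F (lev a)).image (· * a)), φ g := by
        refine mul_le_mul_of_nonneg_left ?_ (by linarith)
        exact Finset.sum_le_sum_of_subset_of_nonneg hUsub fun g _ _ => hφ g

end Cov
/-- Maximal inequality for tempered sequences in a countable abelian group. -/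
theorem stmt_1 {Λ : Type*} [CommGroup Λ] [Countable Λ] [DecidableEq Λ]
    (C : ℝ) (F : ℕ → Finset Λ) (hne : ∀ n, (F n).Nonempty)
    (htemp : ∀ n : ℕ,
      ((((Finset.range n).biUnion fun m => (F m).image fun g => g⁻¹) * F n).card : ℝ)
        ≤ C * ((F n).card : ℝ)) :
    ∃ C₁ : ℝ, 0 < C₁ ∧
      ∀ (X : Type) (_ : MeasurableSpace X) (μ : Measure X), IsProbabilityMeasure μ →
      ∀ T : Λ → X → X, (∀ g, MeasurePreserving (T g) μ μ) →
      (∀ g h x, T (g * h) x = T g (T h x)) →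
      ∀ f : X → ℝ, Integrable f μ →
      ∀ lam : ℝ, 0 < lam →
      μ {x | ∃ n : ℕ, lam < (∑ h ∈ F n, |f (T h x)|) / (F n).card} ≤
        ENNReal.ofReal (C₁ / lam * ∫ x, |f x| ∂μ) := by
  classical
  have hCge1 : (1:ℝ) ≤ C := by
    have h := htemp 1
    have hnb : ((Finset.range 1).biUnion fun m => (F m).image fun g => g⁻¹).Nonempty := by
      obtain ⟨a, haF⟩ := hne 0
      exact ⟨a⁻¹, Finset.mem_biUnion.2 ⟨0, Finset.mem_range.2 one_pos,
        Finset.mem_image.2 ⟨a, haF, rfl⟩⟩⟩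
    have h1 : ((F 1).card : ℝ)
        ≤ ((((Finset.range 1).biUnion fun m => (F m).image fun g => g⁻¹) * F 1).card : ℝ) := by
      exact_mod_cast Finset.card_le_card_mul_left hnb
    have hc1 : (0:ℝ) < ((F 1).card : ℝ) := by exact_mod_cast (hne 1).card_pos
    nlinarith
  have hC0 : (0:ℝ) ≤ C := by linarith
  refine ⟨4*C+8, by linarith, ?_⟩
  intro X mX μ hμ T hT hact f hf lam hlam
  have hsm := hf.1.stronglyMeasurable_mk
  have hae : f =ᵐ[μ] hf.1.mk f := hf.1.ae_eq_mk
  set f' : X → ℝ := hf.1.mk f with hf'def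
  have hf'meas : Measurable f' := hsm.measurable
  have hf'int : Integrable f' μ := hf.congr hae
  have hIeq : ∫ x, |f x| ∂μ = ∫ x, |f' x| ∂μ :=
    integral_congr_ae (hae.mono fun x hx => by show |f x| = _; rw [hx])
  set I := ∫ x, |f' x| ∂μ with hI
  have hInn : 0 ≤ I := integral_nonneg fun x => abs_nonneg _
  set E : ℕ → Set X := fun N =>
    {x | ∃ n, n < N ∧ lam * ((F n).card : ℝ) < ∑ h ∈ F n, |f' (T h x)|} with hE
  have hEmeas : ∀ N, MeasurableSet (E N) := by
    intro N
    have hrw : E N = ⋃ (n : ℕ), ⋃ (_ : n < N),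
        {x | lam * ((F n).card : ℝ) < ∑ h ∈ F n, |f' (T h x)|} := by
      ext x; simp [hE]
    rw [hrw]
    refine MeasurableSet.iUnion fun n => MeasurableSet.iUnion fun _ => ?_
    have hgm : Measurable fun x => ∑ h ∈ F n, |f' (T h x)| :=
      Finset.measurable_sum _ fun h _ => (hf'meas.comp (hT h).measurable).abs
    exact measurableSet_lt measurable_const hgm
  have key : ∀ N : ℕ, μ (E N) ≤ ENNReal.ofReal ((4*C+8)/lam * I) := by
    intro N
    set S : Finset Λ := insert (1:Λ) ((Finset.range N).biUnion F) with hS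
    have h1S : (1:Λ) ∈ S := Finset.mem_insert_self _ _
    obtain ⟨k, hk2, hkne⟩ := aux_folner S h1S
    set B := S ^ k with hB
    have hpt : ∀ x : X, lam * ((B.filter fun b => T b x ∈ E N).card : ℝ)
        ≤ (2*C+4) * ∑ g ∈ S ^ (k+1), |f' (T g x)| := by
      intro x
      set φ : Λ → ℝ := fun g => |f' (T g x)| with hφdef
      have hφ : ∀ g, (0:ℝ) ≤ φ g := fun g => abs_nonneg _
      set A := B.filter (fun b => T b x ∈ E N) with hA
      have hex : ∀ a ∈ A, ∃ n, n < N ∧ lam * ((F n).card : ℝ) < ∑ h ∈ F n, φ (h * a) := by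
        intro a ha
        obtain ⟨n, hn, hlt⟩ := (Finset.mem_filter.1 ha).2
        refine ⟨n, hn, ?_⟩
        have hco : ∑ h ∈ F n, |f' (T h (T a x))| = ∑ h ∈ F n, φ (h * a) :=
          Finset.sum_congr rfl fun h _ => by
            simp only [hφdef]
            rw [hact h a x]
        rw [← hco]
        exact hlt
      set lev : Λ → ℕ := fun a =>
        if hh : ∃ n, n < N ∧ lam * ((F n).card : ℝ) < ∑ h ∈ F n, φ (h * a) then
          Nat.find hh else 0 with hlevdef
      have hlevval : ∀ a, (∃ n, n < N ∧ lam * ((F n).card : ℝ) < ∑ h ∈ F n, φ (h * a)) →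
          lev a < N ∧ lam * ((F (lev a)).card : ℝ) < ∑ h ∈ F (lev a), φ (h * a) := by
        intro a hh
        have hl : lev a = Nat.find hh := by
          simp only [hlevdef]
          rw [dif_pos hh]
        rw [hl]
        exact ⟨(Nat.find_spec hh).1, (Nat.find_spec hh).2⟩
      have hcov := aux_cov C lam hC0 hlam F hne htemp φ hφ N A lev
        (fun a ha => (hlevval a (hex a ha)).1) (fun a ha => (hlevval a (hex a ha)).2)
      refine hcov.trans ?_
      refine mul_le_mul_of_nonneg_left ?_ (by linarith)
      refine Finset.sum_le_sum_of_subset_of_nonneg ?_ (fun g _ _ => hφ g)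
      intro g hg
      obtain ⟨a, ha, hgw⟩ := Finset.mem_biUnion.1 hg
      obtain ⟨h, hh, rfl⟩ := Finset.mem_image.1 hgw
      have haB : a ∈ B := Finset.mem_of_mem_filter a ha
      have hlevlt := (hlevval a (hex a ha)).1
      have hhS : h ∈ S := Finset.mem_insert_of_mem
        (Finset.mem_biUnion.2 ⟨lev a, Finset.mem_range.2 hlevlt, hh⟩)
      rw [pow_succ']
      exact Finset.mul_mem_mul hhS haB
    have hEN := hEmeas N
    have hind : ∀ b : Λ, Integrable (fun x => if T b x ∈ E N then (1:ℝ) else 0) μ := by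
      intro b
      have hrw : (fun x => if T b x ∈ E N then (1:ℝ) else 0)
          = Set.indicator ((T b) ⁻¹' (E N)) (fun _ => (1:ℝ)) := by
        ext x; by_cases hx : T b x ∈ E N <;> simp [Set.indicator_apply, Set.mem_preimage, hx]
      rw [hrw]
      exact (integrable_const (1:ℝ)).indicator ((hT b).measurable hEN)
    have hcomp : ∀ g : Λ, Integrable (fun x => |f' (T g x)|) μ := fun g =>
      ((hT g).integrable_comp hf'meas.abs.aestronglyMeasurable).2 hf'int.abs
    have hLHSint : Integrable (fun x => lam * ∑ b ∈ B, if T b x ∈ E N then (1:ℝ) else 0) μ :=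
      (integrable_finset_sum B fun b _ => hind b).const_mul lam
    have hRHSint : Integrable (fun x => (2*C+4) * ∑ g ∈ S ^ (k+1), |f' (T g x)|) μ :=
      (integrable_finset_sum _ fun g _ => hcomp g).const_mul _
    have hmono : ∫ x, lam * ∑ b ∈ B, (if T b x ∈ E N then (1:ℝ) else 0) ∂μ
        ≤ ∫ x, (2*C+4) * ∑ g ∈ S ^ (k+1), |f' (T g x)| ∂μ := by
      refine integral_mono hLHSint hRHSint fun x => ?_
      have hcf : ∑ b ∈ B, (if T b x ∈ E N then (1:ℝ) else 0)
          = ((B.filter fun b => T b x ∈ E N).card : ℝ) := by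
        rw [Finset.card_filter]
        push_cast
        rfl
      calc lam * ∑ b ∈ B, (if T b x ∈ E N then (1:ℝ) else 0)
          = lam * ((B.filter fun b => T b x ∈ E N).card : ℝ) := by rw [hcf]
        _ ≤ _ := hpt x
    have hLHS : ∫ x, lam * ∑ b ∈ B, (if T b x ∈ E N then (1:ℝ) else 0) ∂μ
        = lam * ((B.card : ℝ) * (μ (E N)).toReal) := by
      rw [integral_const_mul]
      congr 1
      rw [integral_finset_sum B fun b _ => hind b]
      have hterm : ∀ b ∈ B, ∫ x, (if T b x ∈ E N then (1:ℝ) else 0) ∂μ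
          = (μ (E N)).toReal := by
        intro b _
        have hrw : (fun x => if T b x ∈ E N then (1:ℝ) else 0)
            = Set.indicator ((T b) ⁻¹' (E N)) (fun _ => (1:ℝ)) := by
          ext x; by_cases hx : T b x ∈ E N <;> simp [Set.indicator_apply, Set.mem_preimage, hx]
        rw [hrw, integral_indicator ((hT b).measurable hEN), setIntegral_const, Measure.real,
          (hT b).measure_preimage hEN.nullMeasurableSet]
        simp
      rw [Finset.sum_congr rfl hterm, Finset.sum_const, nsmul_eq_mul]
    have hRHS : ∫ x, (2*C+4) * ∑ g ∈ S ^ (k+1), |f' (T g x)| ∂μ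
        = (2*C+4) * (((S ^ (k+1)).card : ℝ) * I) := by
      rw [integral_const_mul]
      congr 1
      rw [integral_finset_sum _ fun g _ => hcomp g]
      have hterm : ∀ g ∈ S ^ (k+1), ∫ x, |f' (T g x)| ∂μ = I := by
        intro g _
        have hmeas : AEStronglyMeasurable (fun y => |f' y|) (Measure.map (T g) μ) := by
          rw [(hT g).map_eq]
          exact hf'meas.abs.aestronglyMeasurable
        have h1 : ∫ y, |f' y| ∂(Measure.map (T g) μ) = ∫ x, |f' (T g x)| ∂μ :=
          integral_map (hT g).measurable.aemeasurable hmeas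
        rw [← h1, (hT g).map_eq]
      rw [Finset.sum_congr rfl hterm, Finset.sum_const, nsmul_eq_mul]
    rw [hLHS, hRHS] at hmono
    have hBpos : (0:ℝ) < (B.card : ℝ) := by exact_mod_cast hkne.card_pos
    have hfinal : (μ (E N)).toReal ≤ (4*C+8)/lam * I := by
      have hSk : ((S ^ (k+1)).card : ℝ) ≤ 2 * (B.card : ℝ) := hk2
      have htR : (0:ℝ) ≤ (μ (E N)).toReal := ENNReal.toReal_nonneg
      have h1 : (2*C+4) * (((S ^ (k+1)).card : ℝ) * I) ≤ (2*C+4) * (2 * (B.card:ℝ) * I) :=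
        mul_le_mul_of_nonneg_left (mul_le_mul_of_nonneg_right hSk hInn) (by linarith)
      rw [div_mul_eq_mul_div, le_div_iff₀ hlam]
      nlinarith [hmono, h1, hBpos]
    calc μ (E N) = ENNReal.ofReal ((μ (E N)).toReal) :=
          (ENNReal.ofReal_toReal (measure_ne_top μ _)).symm
      _ ≤ ENNReal.ofReal ((4*C+8)/lam * I) := ENNReal.ofReal_le_ofReal hfinal
  set Bad : Set X := ⋃ (h : Λ), {x | f (T h x) ≠ f' (T h x)} with hBad
  have hBadnull : μ Bad = 0 := by
    refine measure_iUnion_null fun h => ?_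
    have h0 : μ {y | f y ≠ f' y} = 0 := ae_iff.1 hae
    have hpre : {x | f (T h x) ≠ f' (T h x)} = (T h) ⁻¹' {y | f y ≠ f' y} := rfl
    rw [hpre]
    exact (hT h).quasiMeasurePreserving.preimage_null h0
  have hsubset : {x | ∃ n : ℕ, lam < (∑ h ∈ F n, |f (T h x)|) / ((F n).card : ℝ)}
      ⊆ (⋃ N, E N) ∪ Bad := by
    intro x hx
    by_cases hxB : x ∈ Bad
    · exact Or.inr hxB
    · left
      obtain ⟨n, hn⟩ := hx
      have hgood : ∀ h : Λ, f (T h x) = f' (T h x) := by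
        intro h
        by_contra hcon
        exact hxB (Set.mem_iUnion.2 ⟨h, hcon⟩)
      have hsumeq : ∑ h ∈ F n, |f (T h x)| = ∑ h ∈ F n, |f' (T h x)| :=
        Finset.sum_congr rfl fun h _ => by rw [hgood h]
      have hcpos : (0:ℝ) < ((F n).card : ℝ) := by exact_mod_cast (hne n).card_pos
      rw [hsumeq] at hn
      exact Set.mem_iUnion.2 ⟨n+1, n, Nat.lt_succ_self n, (lt_div_iff₀ hcpos).1 hn⟩
  have hmon : Monotone E := by
    intro M N hMN x hx
    obtain ⟨n, hn, hlt⟩ := hx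
    exact ⟨n, lt_of_lt_of_le hn hMN, hlt⟩
  calc μ {x | ∃ n : ℕ, lam < (∑ h ∈ F n, |f (T h x)|) / ((F n).card : ℝ)}
      ≤ μ ((⋃ N, E N) ∪ Bad) := measure_mono hsubset
    _ ≤ μ (⋃ N, E N) + μ Bad := measure_union_le _ _
    _ = μ (⋃ N, E N) := by rw [hBadnull, add_zero]
    _ = ⨆ N, μ (E N) := hmon.directed_le.measure_iUnion
    _ ≤ ENNReal.ofReal ((4*C+8)/lam * I) := iSup_le key
    _ = ENNReal.ofReal ((4*C+8)/lam * ∫ x, |f x| ∂μ) := by rw [hIeq]
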